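/- Let $B$ be a commutative graded algebra with $B_0 = \mathbb{C}$ and maximal graded ideal $B_+$, let $\mathcal{A}$ be a graded $B$-algebra which is flat over $B$, and let $A := \mathcal{A}/B_+\mathcal{A}$. Suppose $\gamma$ is a $B$-linear graded algebra automorphism of $\mathcal{A}$ inducing the identity on $A$. Assume moreover that each graded component of $\mathcal{A}$ is finite-dimensional. Then $\gamma$ acts on each graded component $\mathcal{A}_N$ of $\mathcal{A}$ as a unipotent linear operator. -/
import Mathlib

open DirectSum

section Aux

variable (B : Type) [CommRing B] [Algebra ℂ B]
    (ℬ : ℕ → Submodule ℂ B)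
    (A : Type) [CommRing A] [Algebra ℂ A] [Algebra B A] [IsScalarTower ℂ B A]
    (𝒜 : ℕ → Submodule ℂ A)

/-- Degree-`N` part of the ideal generated by positive-degree elements of `B`. -/
def stmt10T (N : ℕ) : Submodule ℂ A :=
  Submodule.span ℂ {a | ∃ i b y, 0 < i ∧ i ≤ N ∧ b ∈ ℬ i ∧ y ∈ 𝒜 (N - i) ∧
    a = algebraMap B A b * y}

variable [GradedAlgebra 𝒜]

lemma stmt10_mul_mem_T {c : A} {i j : ℕ} (hc : c ∈ 𝒜 i) {t : A}
    (ht : t ∈ stmt10T B ℬ A 𝒜 j) : c * t ∈ stmt10T B ℬ A 𝒜 (i + j) := by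
  induction ht using Submodule.span_induction with
  | mem a ha =>
    obtain ⟨k, b, y, hk0, hkj, hb, hy, rfl⟩ := ha
    refine Submodule.subset_span ⟨k, b, c * y, hk0, by omega, hb, ?_, by ring⟩
    have : i + (j - k) = i + j - k := by omega
    exact this ▸ SetLike.mul_mem_graded hc hy
  | zero => simpa using (Submodule.zero_mem _)
  | add u v _ _ hu hv => simpa [mul_add] using Submodule.add_mem _ hu hv
  | smul r u _ hu => simpa [mul_smul_comm] using Submodule.smul_mem _ r hu

lemma stmt10_proj_mem_T (hcompat : ∀ i, ∀ b ∈ ℬ i, algebraMap B A b ∈ 𝒜 i)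
    {z : A} (hz : z ∈ Ideal.span (algebraMap B A '' (⋃ i > 0, (ℬ i : Set B)))) :
    ∀ M : ℕ, (DirectSum.decompose 𝒜 z M : A) ∈ stmt10T B ℬ A 𝒜 M := by
  induction hz using Submodule.span_induction with
  | mem s hs =>
    intro M
    obtain ⟨b, hb, rfl⟩ := hs
    simp only [Set.mem_iUnion] at hb
    obtain ⟨i, hi0, hbi⟩ := hb
    have hmem : algebraMap B A b ∈ 𝒜 i := hcompat i b hbi
    rcases eq_or_ne i M with rfl | hne
    · rw [DirectSum.decompose_of_mem_same 𝒜 hmem]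
      exact Submodule.subset_span ⟨i, b, 1, hi0, le_rfl, hbi, by
        simpa using SetLike.one_mem_graded 𝒜, by rw [mul_one]⟩
    · rw [DirectSum.decompose_of_mem_ne 𝒜 hmem hne]
      exact Submodule.zero_mem _
  | zero => intro M; simp only [DirectSum.decompose_zero]; simpa using Submodule.zero_mem _
  | add u v _ _ hu hv =>
    intro M
    rw [DirectSum.decompose_add]
    simpa using Submodule.add_mem _ (hu M) (hv M)
  | smul a z _ hz =>
    intro M
    classical
    rw [smul_eq_mul]
    have hsum : a * z = ∑ i ∈ (DirectSum.decompose 𝒜 a).support,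
        (DirectSum.decompose 𝒜 a i : A) * z := by
      rw [← Finset.sum_mul, DirectSum.sum_support_decompose]
    have : (DirectSum.decompose 𝒜 (a * z) M : A)
        = ∑ i ∈ (DirectSum.decompose 𝒜 a).support,
          (DirectSum.decompose 𝒜 ((DirectSum.decompose 𝒜 a i : A) * z) M : A) := by
      rw [hsum]
      rw [← GradedRing.proj_apply]
      rw [map_sum (GradedRing.proj 𝒜 M)]
      simp [GradedRing.proj_apply]
    rw [this]
    refine Submodule.sum_mem _ fun i _ => ?_
    by_cases hle : i ≤ M
    · rw [DirectSum.coe_decompose_mul_of_left_mem_of_le 𝒜 (SetLike.coe_mem _) hle]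
      have := stmt10_mul_mem_T B ℬ A 𝒜 (SetLike.coe_mem (DirectSum.decompose 𝒜 a i))
        (hz (M - i))
      rwa [Nat.add_sub_cancel' hle] at this
    · rw [DirectSum.coe_decompose_mul_of_left_mem_of_not_le 𝒜 (SetLike.coe_mem _) hle]
      exact Submodule.zero_mem _

end Aux

/-- Let `B` be a commutative graded `ℂ`-algebra with `B_0 = ℂ` and
maximal graded ideal `B_+`, let `A` be a graded `B`-algebra (the grading being compatible
with the structure map) which is flat over `B` and has finite-dimensional graded
components.  If `γ` is a `B`-linear graded algebra automorphism of `A` inducing the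
identity on `A/B_+A`, then `γ` acts on each graded component `A_N` as a unipotent
linear operator. -/
theorem stmt_10 (B : Type) [CommRing B] [Algebra ℂ B]
    (ℬ : ℕ → Submodule ℂ B) [GradedAlgebra ℬ] (hB0 : ℬ 0 = (1 : Submodule ℂ B))
    (A : Type) [CommRing A] [Algebra ℂ A] [Algebra B A] [IsScalarTower ℂ B A]
    (𝒜 : ℕ → Submodule ℂ A) [GradedAlgebra 𝒜]
    (hcompat : ∀ i, ∀ b ∈ ℬ i, algebraMap B A b ∈ 𝒜 i)
    (hflat : Module.Flat B A)
    (hfin : ∀ i, FiniteDimensional ℂ (𝒜 i))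
    (Bplus : Ideal A)
    (hBplus : Bplus = Ideal.span (algebraMap B A '' (⋃ i > 0, (ℬ i : Set B))))
    (γ : A ≃ₐ[B] A)
    (hγgr : ∀ i, ∀ x ∈ 𝒜 i, γ x ∈ 𝒜 i)
    (hγid : ∀ x : A, γ x - x ∈ Bplus) :
    ∀ N : ℕ, ∃ k : ℕ, ∀ x ∈ 𝒜 N,
      (((γ : A →ₗ[B] A) - LinearMap.id : Module.End B A) ^ k) x = 0 := by
  set D : Module.End B A := (γ : A →ₗ[B] A) - LinearMap.id with hD
  have hDapp : ∀ x : A, D x = γ x - x := by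
    intro x; simp [hD]
  have main : ∀ N : ℕ, ∀ x ∈ 𝒜 N, (D ^ (N + 1)) x = 0 := by
    intro N
    induction N using Nat.strong_induction_on with
    | _ N IH =>
      intro x hx
      have hDx𝒜 : D x ∈ 𝒜 N := by
        rw [hDapp]; exact Submodule.sub_mem _ (hγgr N x hx) hx
      have hDxB : D x ∈ Bplus := by rw [hDapp]; exact hγid x
      have hT : D x ∈ stmt10T B ℬ A 𝒜 N := by
        have := stmt10_proj_mem_T B ℬ A 𝒜 hcompat (hBplus ▸ hDxB) N
        rwa [DirectSum.decompose_of_mem_same 𝒜 hDx𝒜] at this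
      have hkill : ∀ t ∈ stmt10T B ℬ A 𝒜 N, (D ^ N) t = 0 := by
        intro t ht
        induction ht using Submodule.span_induction with
        | mem a ha =>
          obtain ⟨i, b, y, hi0, hiN, hb, hy, rfl⟩ := ha
          have h1 : (D ^ (N - i + 1)) y = 0 := IH (N - i) (by omega) y hy
          have hNy : (D ^ N) y = 0 := by
            have hNeq : N - (N - i + 1) + (N - i + 1) = N := by omega
            calc (D ^ N) y = (D ^ (N - (N - i + 1))) ((D ^ (N - i + 1)) y) := by
                  rw [← Module.End.mul_apply, ← pow_add, hNeq]
              _ = 0 := by rw [h1, map_zero]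
          rw [← Algebra.smul_def, map_smul, hNy, smul_zero]
        | zero => exact map_zero _
        | add u v _ _ hu hv => rw [map_add, hu, hv, add_zero]
        | smul c u _ hu =>
          rw [← algebraMap_smul B c u, map_smul, hu, smul_zero]
      rw [pow_succ, Module.End.mul_apply]
      exact hkill _ hT
  intro N
  exact ⟨N + 1, main N⟩
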